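/- arXiv:2206.13869 — 3 statements merged into one kernel-verified Lean document; each statement's English description precedes it below -/
import Mathlib

section
/- Let (X, d) be a metric space, κ, δ ≥ 0, and let σ : [0, T] → X be a (1, κ)-near-geodesic. Suppose that for every z ∈ X and every t ∈ [0, T], min{⟨σ(0), z⟩_{σ(t)}, ⟨z, σ(T)⟩_{σ(t)}} ≤ δ. Then for every z ∈ X, infDist(z, range σ) ≤ ⟨σ(0), σ(T)⟩_z + 2δ + 3κ/2. -/
open Set Metric

/-- The Gromov product `⟨x, y⟩_o = (d(o,x) + d(o,y) - d(x,y))/2`. -/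
noncomputable def gromovProd {X : Type*} [MetricSpace X] (o x y : X) : ℝ :=
  (dist o x + dist o y - dist x y) / 2

/-- Lemma 10.6 of the paper: if along a `(1,κ)`-near-geodesic `σ : [0,T] → X` every point
`σ(t)` satisfies `min{⟨σ(0), z⟩_{σ(t)}, ⟨z, σ(T)⟩_{σ(t)}} ≤ δ`, then
`infDist(z, range σ) ≤ ⟨σ(0), σ(T)⟩_z + 2δ + 3κ/2`. -/
theorem stmt1 {X : Type*} [MetricSpace X] (κ δ T : ℝ) (hκ : 0 ≤ κ) (hδ : 0 ≤ δ) (hT : 0 ≤ T)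
    (σ : ℝ → X) (hcont : ContinuousOn σ (Icc 0 T))
    (hgeo : ∀ s ∈ Icc 0 T, ∀ t ∈ Icc 0 T,
      |t - s| - κ ≤ dist (σ s) (σ t) ∧ dist (σ s) (σ t) ≤ |t - s| + κ)
    (hmin : ∀ z : X, ∀ t ∈ Icc 0 T,
      min (gromovProd (σ t) (σ 0) z) (gromovProd (σ t) z (σ T)) ≤ δ) :
    ∀ z : X, infDist z (σ '' Icc 0 T) ≤ gromovProd z (σ 0) (σ T) + 2 * δ + 3 * κ / 2 := by
  intro z
  have h0T : (0 : ℝ) ∈ Icc 0 T := ⟨le_refl 0, hT⟩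
  have hTT : T ∈ Icc (0 : ℝ) T := ⟨hT, le_refl T⟩
  -- h t = f t - g t
  set h : ℝ → ℝ := fun t =>
    gromovProd (σ t) (σ 0) z - gromovProd (σ t) z (σ T) with hh
  have hhc : ContinuousOn h (Icc 0 T) := by
    have c1 : ContinuousOn (fun t => dist (σ t) (σ 0)) (Icc 0 T) :=
      ((continuous_id.dist continuous_const).comp_continuousOn hcont)
    have c2 : ContinuousOn (fun t => dist (σ t) z) (Icc 0 T) :=
      ((continuous_id.dist continuous_const).comp_continuousOn hcont)
    have c3 : ContinuousOn (fun t => dist (σ t) (σ T)) (Icc 0 T) :=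
      ((continuous_id.dist continuous_const).comp_continuousOn hcont)
    simp only [hh, gromovProd]
    exact (((c1.add c2).sub continuousOn_const).div_const 2).sub
      (((c2.add c3).sub continuousOn_const).div_const 2)
  have hh0 : h 0 ≤ 0 := by
    simp only [hh, gromovProd, dist_self]
    have := dist_triangle z (σ 0) (σ T)
    have := dist_comm (σ 0) z
    linarith
  have hhT : 0 ≤ h T := by
    simp only [hh, gromovProd, dist_self]
    have := dist_triangle (σ 0) (σ T) z
    have := dist_comm (σ T) (σ 0)
    have := dist_comm (σ T) z
    linarith
  obtain ⟨τ, hτ, hτ0⟩ := intermediate_value_Icc hT hhc ⟨hh0, hhT⟩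
  have hmin' := hmin z τ hτ
  have heq : gromovProd (σ τ) (σ 0) z = gromovProd (σ τ) z (σ T) := by
    have : h τ = 0 := hτ0
    simp only [hh] at this; linarith
  rw [heq, min_self] at hmin'
  have hboth : gromovProd (σ τ) (σ 0) z ≤ δ := heq ▸ hmin'
  have h1 := (hgeo 0 h0T τ hτ).1
  have h2 := (hgeo T hTT τ hτ).1
  have h3 := (hgeo 0 h0T T hTT).2
  rw [abs_of_nonneg (by linarith [hτ.1] : (0:ℝ) ≤ τ - 0)] at h1
  rw [abs_of_nonpos (by linarith [hτ.2] : τ - T ≤ 0)] at h2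
  rw [abs_of_nonneg (by linarith : (0:ℝ) ≤ T - 0)] at h3
  calc infDist z (σ '' Icc 0 T) ≤ dist z (σ τ) :=
        infDist_le_dist_of_mem (mem_image_of_mem σ hτ)
    _ ≤ gromovProd z (σ 0) (σ T) + 2 * δ + 3 * κ / 2 := by
        simp only [gromovProd] at hboth hmin' ⊢
        have e1 := dist_comm z (σ τ)
        have e2 := dist_comm (σ 0) z
        have e3 := dist_comm (σ τ) (σ 0)
        have e4 := dist_comm (σ τ) (σ T)
        have e5 := dist_comm (σ 0) (σ T)
        linarith
end

section
/- Let (X, d) be a metric space and κ, δ ≥ 0. Let σ : [0, T] → X be a (1, κ)-near-geodesic, let z ∈ X, and suppose ρ : [0, R] → X with ρ(0) = z, ρ(R) = σ(0) and υ : [0, S] → X with υ(0) = z, υ(S) = σ(T) are (1, κ)-near-geodesics. Suppose some point p = σ(τ) on σ satisfies infDist(p, range ρ ∪ range υ) ≤ δ. Then min{⟨σ(0), z⟩_p, ⟨σ(T), z⟩_p} ≤ δ + 3κ/2. -/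
open Set Metric

/-- Key computation in part (2) of Theorem 10.4: if a point `p = σ(τ)` on the
`(1,κ)`-near-geodesic `σ` joining `σ(0)` to `σ(T)` lies within distance `δ` of the union of the
two `(1,κ)`-near-geodesics `ρ` (from `z` to `σ(0)`) and `υ` (from `z` to `σ(T)`), then
`min{⟨σ(0), z⟩_p, ⟨σ(T), z⟩_p} ≤ δ + 3κ/2`. -/
theorem stmt3 {X : Type*} [MetricSpace X] (κ δ T R S : ℝ)
    (hκ : 0 ≤ κ) (hδ : 0 ≤ δ) (hT : 0 ≤ T) (hR : 0 ≤ R) (hS : 0 ≤ S)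
    (σ ρ υ : ℝ → X) (z : X)
    (hσcont : ContinuousOn σ (Icc 0 T))
    (hσgeo : ∀ s ∈ Icc 0 T, ∀ t ∈ Icc 0 T,
      |t - s| - κ ≤ dist (σ s) (σ t) ∧ dist (σ s) (σ t) ≤ |t - s| + κ)
    (hρcont : ContinuousOn ρ (Icc 0 R))
    (hρgeo : ∀ s ∈ Icc 0 R, ∀ t ∈ Icc 0 R,
      |t - s| - κ ≤ dist (ρ s) (ρ t) ∧ dist (ρ s) (ρ t) ≤ |t - s| + κ)
    (hυcont : ContinuousOn υ (Icc 0 S))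
    (hυgeo : ∀ s ∈ Icc 0 S, ∀ t ∈ Icc 0 S,
      |t - s| - κ ≤ dist (υ s) (υ t) ∧ dist (υ s) (υ t) ≤ |t - s| + κ)
    (hρ0 : ρ 0 = z) (hρR : ρ R = σ 0) (hυ0 : υ 0 = z) (hυS : υ S = σ T)
    (τ : ℝ) (hτ : τ ∈ Icc 0 T)
    (hdist : infDist (σ τ) (ρ '' Icc 0 R ∪ υ '' Icc 0 S) ≤ δ) :
    min (gromovProd (σ τ) (σ 0) z) (gromovProd (σ τ) (σ T) z) ≤ δ + 3 * κ / 2 := by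
  have hcomp : IsCompact (ρ '' Icc 0 R ∪ υ '' Icc 0 S) :=
    (isCompact_Icc.image_of_continuousOn hρcont).union
      (isCompact_Icc.image_of_continuousOn hυcont)
  have hne : (ρ '' Icc 0 R ∪ υ '' Icc 0 S).Nonempty :=
    ⟨ρ 0, Or.inl (mem_image_of_mem ρ ⟨le_refl 0, hR⟩)⟩
  obtain ⟨q, hq, hqd⟩ := hcomp.exists_infDist_eq_dist hne (σ τ)
  rw [hqd] at hdist
  rcases hq with ⟨r, hr, rfl⟩ | ⟨r, hr, rfl⟩
  · refine le_trans (min_le_left _ _) ?_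
    have h1 : dist (ρ r) (ρ R) ≤ |R - r| + κ :=
      (hρgeo r hr R ⟨hR, le_refl R⟩).2
    have h2 : dist (ρ r) (ρ 0) ≤ |0 - r| + κ :=
      (hρgeo r hr 0 ⟨le_refl 0, hR⟩).2
    have h3 : |0 - R| - κ ≤ dist (ρ R) (ρ 0) :=
      (hρgeo R ⟨hR, le_refl R⟩ 0 ⟨le_refl 0, hR⟩).1
    have hrR : |R - r| = R - r := abs_of_nonneg (by linarith [hr.2])
    have hr0 : |(0 : ℝ) - r| = r := by rw [abs_sub_comm, sub_zero, abs_of_nonneg hr.1]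
    have hR0 : |(0 : ℝ) - R| = R := by rw [abs_sub_comm, sub_zero, abs_of_nonneg hR]
    have ha : dist (σ τ) (σ 0) ≤ dist (σ τ) (ρ r) + dist (ρ r) (ρ R) := by
      rw [hρR] at *; exact dist_triangle _ _ _
    have hb : dist (σ τ) z ≤ dist (σ τ) (ρ r) + dist (ρ r) (ρ 0) := by
      rw [hρ0] at *; exact dist_triangle _ _ _
    have hc : dist (σ 0) z = dist (ρ R) (ρ 0) := by rw [hρR, hρ0]
    rw [gromovProd, hc]
    rw [hrR] at h1; rw [hr0] at h2; rw [hR0] at h3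
    linarith
  · refine le_trans (min_le_right _ _) ?_
    have h1 : dist (υ r) (υ S) ≤ |S - r| + κ :=
      (hυgeo r hr S ⟨hS, le_refl S⟩).2
    have h2 : dist (υ r) (υ 0) ≤ |0 - r| + κ :=
      (hυgeo r hr 0 ⟨le_refl 0, hS⟩).2
    have h3 : |0 - S| - κ ≤ dist (υ S) (υ 0) :=
      (hυgeo S ⟨hS, le_refl S⟩ 0 ⟨le_refl 0, hS⟩).1
    have hrS : |S - r| = S - r := abs_of_nonneg (by linarith [hr.2])
    have hr0 : |(0 : ℝ) - r| = r := by rw [abs_sub_comm, sub_zero, abs_of_nonneg hr.1]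
    have hS0 : |(0 : ℝ) - S| = S := by rw [abs_sub_comm, sub_zero, abs_of_nonneg hS]
    have ha : dist (σ τ) (σ T) ≤ dist (σ τ) (υ r) + dist (υ r) (υ S) := by
      rw [hυS] at *; exact dist_triangle _ _ _
    have hb : dist (σ τ) z ≤ dist (σ τ) (υ r) + dist (υ r) (υ 0) := by
      rw [hυ0] at *; exact dist_triangle _ _ _
    have hc : dist (σ T) z = dist (υ S) (υ 0) := by rw [hυS, hυ0]
    rw [gromovProd, hc]
    rw [hrS] at h1; rw [hr0] at h2; rw [hS0] at h3
    linarith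
end

section
/- Let Ω ⊂ ℂ be a domain (open connected set), let x ∈ ∂Ω, let z ∈ Ω, and suppose there exist m > 0 and w ∈ ℂ with |z - w| ≤ 2·δ_Ω(z) and the closed ball B(w, m·δ_Ω(z)) ⊂ ℂ \ Ω, where δ_Ω(z) = dist(z, ∂Ω) and m < 2. Then the holomorphic map f(ζ) = m·δ_Ω(z)/(ζ - w) maps Ω into the unit disk 𝔻, and its derivative at z satisfies |f'(z)|/(1 - |f(z)|²) ≥ m/(4(2 - m)·δ_Ω(z)). -/
open Set Metric Complex

/-- Core estimate in Lemma 2.4 of the paper: for a planar domain `Ω`, `z ∈ Ω`, and a disk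
`B(w, m·δ_Ω(z)) ⊆ ℂ \ Ω` with `|z - w| ≤ 2·δ_Ω(z)` and `0 < m < 2`, the map
`f(ζ) = m·δ_Ω(z)/(ζ - w)` maps `Ω` into the unit disk and satisfies
`|f'(z)|/(1 - |f(z)|²) ≥ m/(4(2 - m)·δ_Ω(z))`. -/
theorem stmt4 (Ω : Set ℂ) (hopen : IsOpen Ω) (hconn : IsConnected Ω)
    (x : ℂ) (hx : x ∈ frontier Ω) (z : ℂ) (hz : z ∈ Ω)
    (m : ℝ) (hm0 : 0 < m) (hm2 : m < 2) (w : ℂ)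
    (hzw : ‖z - w‖ ≤ 2 * infDist z (frontier Ω))
    (hball : closedBall w (m * infDist z (frontier Ω)) ⊆ Ωᶜ) :
    (∀ ζ ∈ Ω, ‖((m * infDist z (frontier Ω) : ℝ) : ℂ) / (ζ - w)‖ < 1) ∧
    m / (4 * (2 - m) * infDist z (frontier Ω)) ≤
      ‖deriv (fun ζ : ℂ => ((m * infDist z (frontier Ω) : ℝ) : ℂ) / (ζ - w)) z‖ /
        (1 - ‖((m * infDist z (frontier Ω) : ℝ) : ℂ) / (z - w)‖ ^ 2) := by
  set δ := infDist z (frontier Ω) with hδdef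
  have hzf : z ∉ frontier Ω := by
    rw [hopen.frontier_eq]; exact fun h => h.2 hz
  have hδ : 0 < δ := by
    rw [hδdef]
    exact (IsClosed.notMem_iff_infDist_pos isClosed_frontier ⟨x, hx⟩).mp hzf
  have key : ∀ ζ ∈ Ω, m * δ < ‖ζ - w‖ := by
    intro ζ hζ
    by_contra h
    push_neg at h
    exact hball (by simpa [Metric.mem_closedBall, dist_eq_norm] using h) hζ
  have hc : 0 < m * δ := mul_pos hm0 hδ
  have part1 : ∀ ζ ∈ Ω, ‖((m * δ : ℝ) : ℂ) / (ζ - w)‖ < 1 := by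
    intro ζ hζ
    have h1 := key ζ hζ
    have h2 : (0:ℝ) < ‖ζ - w‖ := hc.trans h1
    rw [norm_div, Complex.norm_real, Real.norm_of_nonneg hc.le, div_lt_one h2]
    exact h1
  refine ⟨part1, ?_⟩
  have hr : m * δ < ‖z - w‖ := key z hz
  have hrpos : (0:ℝ) < ‖z - w‖ := hc.trans hr
  have hzwne : z - w ≠ 0 := fun h => by simp [h] at hrpos
  have hd : HasDerivAt (fun ζ : ℂ => ((m * δ : ℝ) : ℂ) / (ζ - w))
      (((m * δ : ℝ) : ℂ) * (-1 / (z - w) ^ 2)) z := by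
    have h1 : HasDerivAt (fun ζ : ℂ => ζ - w) 1 z := (hasDerivAt_id z).sub_const w
    have h2 := h1.inv hzwne
    simpa [div_eq_mul_inv] using h2.const_mul ((m * δ : ℝ) : ℂ)
  rw [hd.deriv]
  have hnorm1 : ‖((m * δ : ℝ) : ℂ) * (-1 / (z - w) ^ 2)‖ = (m * δ) / ‖z - w‖ ^ 2 := by
    rw [norm_mul, Complex.norm_real, Real.norm_of_nonneg hc.le, norm_div, norm_neg,
      norm_one, norm_pow, one_div, div_eq_mul_inv]
  have hnorm2 : ‖((m * δ : ℝ) : ℂ) / (z - w)‖ = (m * δ) / ‖z - w‖ := by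
    rw [norm_div, Complex.norm_real, Real.norm_of_nonneg hc.le]
  rw [hnorm1, hnorm2]
  set r := ‖z - w‖ with hrdef
  have hden : 0 < 1 - ((m * δ) / r) ^ 2 := by
    have : (m * δ) / r < 1 := (div_lt_one hrpos).mpr hr
    have hnn : 0 ≤ (m * δ) / r := div_nonneg hc.le hrpos.le
    nlinarith
  have h4 : (0:ℝ) < 4 * (2 - m) * δ := by nlinarith
  rw [div_le_div_iff₀ h4 hden]
  have hr2 : r ≤ 2 * δ := hzw
  have hrr : (0:ℝ) < r ^ 2 := by positivity
  have hid1 : m * (1 - (m * δ / r) ^ 2) = (m * r ^ 2 - m * (m * δ) ^ 2) / r ^ 2 := by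
    field_simp
  have hid2 : m * δ / r ^ 2 * (4 * (2 - m) * δ) = m * δ * (4 * (2 - m) * δ) / r ^ 2 := by
    ring
  rw [hid1, hid2, div_le_div_iff₀ hrr hrr]
  have h5 : 0 ≤ m * ((2 * δ - r) * (2 * δ + r)) :=
    mul_nonneg hm0.le (mul_nonneg (by linarith) (by linarith))
  have h6 : 0 ≤ m * δ ^ 2 * (m - 2) ^ 2 :=
    mul_nonneg (mul_nonneg hm0.le (sq_nonneg δ)) (sq_nonneg (m - 2))
  nlinarith [h5, h6, hrr]
end
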